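/- Let Σ be a compact Riemannian surface with nonempty boundary, α < λ₁ᴰ, and let u be a Steklov eigenfunction with frequency α (Δu + αu = 0, ∂u/∂ν = σu) having exactly two nodal domains Ω and Ω′, on which u > 0 and u < 0 respectively. Suppose there exists a positive Steklov eigenfunction φ > 0 with a different Steklov eigenvalue σ₀ ≠ σ. Then both nodal domains meet the boundary: ∂Σ ∩ Ω ≠ ∅ and ∂Σ ∩ Ω′ ≠ ∅. -/

import Mathlib

/-!
Green's identity for two solutions of `Δf + αf = 0` with different Steklov eigenvalues
`σ ≠ σ₀` makes them orthogonal on the boundary: `∫_{∂Σ} u φ = 0`. Since `α < λ₁ᴰ`, the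
eigenfunction `u` cannot vanish on all of `∂Σ`, and as `φ > 0` the orthogonality forces `u`
to take both signs on `∂Σ`. A boundary point where `u > 0` lies in `Ω`, one where `u < 0`
lies in `Ω'`.
-/

section AbstractSteklov

variable {X : Type*} {bd : Set X} {intB : (X → ℝ) → ℝ}

theorem boundary_integral_mul_eq_zero_of_steklov (Δ Dν : (X → ℝ) → (X → ℝ))
    (intS : (X → ℝ) → ℝ)
    (hGreen : ∀ u v : X → ℝ,
      intS (fun x => u x * Δ v x - v x * Δ u x) =
        intB (fun x => u x * Dν v x - v x * Dν u x))
    (hS0 : intS 0 = 0)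
    (hBeq : ∀ f g : X → ℝ, (∀ x ∈ bd, f x = g x) → intB f = intB g)
    (hBsmul : ∀ (c : ℝ) (f : X → ℝ), intB (fun x => c * f x) = c * intB f)
    {α σ σ₀ : ℝ} (hσ : σ₀ ≠ σ) {u φ : X → ℝ}
    (hu : ∀ x, Δ u x + α * u x = 0) (hub : ∀ x ∈ bd, Dν u x = σ * u x)
    (hφ : ∀ x, Δ φ x + α * φ x = 0) (hφb : ∀ x ∈ bd, Dν φ x = σ₀ * φ x) :
    intB (fun x => u x * φ x) = 0 := by
  have hinterior : (fun x => u x * Δ φ x - φ x * Δ u x) = 0 := by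
    funext x
    rw [Pi.zero_apply, show Δ φ x = -(α * φ x) by linarith [hφ x],
      show Δ u x = -(α * u x) by linarith [hu x]]
    ring
  have hboundary : intB (fun x => u x * Dν φ x - φ x * Dν u x) =
      (σ₀ - σ) * intB (fun x => u x * φ x) := by
    rw [← hBsmul]
    refine hBeq _ _ fun x hx => ?_
    rw [hφb x hx, hub x hx]
    ring
  have hzero : (σ₀ - σ) * intB (fun x => u x * φ x) = 0 := by
    rw [← hboundary, ← hGreen, hinterior, hS0]
  exact (mul_eq_zero.mp hzero).resolve_left (sub_ne_zero.mpr hσ)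

theorem exists_ne_zero_on_boundary_of_lt_dirichlet (Δ : (X → ℝ) → (X → ℝ)) {lam1 α : ℝ}
    (hlam1 : ∀ (μ : ℝ) (v : X → ℝ), v ≠ 0 → (∀ x, Δ v x + μ * v x = 0) →
      (∀ x ∈ bd, v x = 0) → lam1 ≤ μ)
    (hα : α < lam1) {u : X → ℝ} (hu : ∀ x, Δ u x + α * u x = 0) (hne : u ≠ 0) :
    ∃ x ∈ bd, u x ≠ 0 := by
  by_contra! hvanish
  exact hα.not_ge (hlam1 α u hne hu hvanish)

variable (hBsmul : ∀ (c : ℝ) (f : X → ℝ), intB (fun x => c * f x) = c * intB f)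
    (hBpos : ∀ f : X → ℝ, (∀ x ∈ bd, 0 ≤ f x) → (∃ x ∈ bd, f x ≠ 0) → 0 < intB f)
    {u φ : X → ℝ} (hφ : ∀ x ∈ bd, 0 < φ x) (horth : intB (fun x => u x * φ x) = 0)
    (hu : ∃ x ∈ bd, u x ≠ 0)
include hBsmul hBpos hφ horth hu

theorem exists_pos_on_boundary_of_orthogonal : ∃ x ∈ bd, 0 < u x := by
  by_contra! hnonpos
  obtain ⟨x₀, hx₀, hux₀⟩ := hu
  have hpos : 0 < intB (fun x => -1 * (u x * φ x)) := by
    refine hBpos _ (fun x hx => ?_) ⟨x₀, hx₀, ?_⟩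
    · nlinarith [hnonpos x hx, hφ x hx]
    · simpa using ⟨hux₀, (hφ x₀ hx₀).ne'⟩
  rw [hBsmul, horth, mul_zero] at hpos
  exact hpos.false

theorem exists_neg_on_boundary_of_orthogonal : ∃ x ∈ bd, u x < 0 := by
  have horth_neg : intB (fun x => -u x * φ x) = 0 := by
    simpa only [neg_mul, one_mul, horth, mul_zero] using hBsmul (-1) (fun x => u x * φ x)
  obtain ⟨x, hx, hux⟩ := exists_pos_on_boundary_of_orthogonal hBsmul hBpos hφ horth_neg
    (by simpa only [Pi.neg_apply, ne_eq, neg_eq_zero] using hu)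
  exact ⟨x, hx, neg_pos.mp hux⟩

end AbstractSteklov

theorem stmt10_general (X : Type*) [TopologicalSpace X]
    (Δ Dν : (X → ℝ) → (X → ℝ)) (bd : Set X)
    (intS intB : (X → ℝ) → ℝ)
    (hGreen : ∀ u v : X → ℝ,
      intS (fun x => u x * Δ v x - v x * Δ u x) =
        intB (fun x => u x * Dν v x - v x * Dν u x))
    (hS0 : intS 0 = 0)
    (hBeq : ∀ f g : X → ℝ, (∀ x ∈ bd, f x = g x) → intB f = intB g)
    (hBsmul : ∀ (c : ℝ) (f : X → ℝ), intB (fun x => c * f x) = c * intB f)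
    (hBpos : ∀ f : X → ℝ, (∀ x ∈ bd, 0 ≤ f x) → (∃ x ∈ bd, f x ≠ 0) → 0 < intB f)
    (lam1 α : ℝ)
    (hlam1 : ∀ (μ : ℝ) (v : X → ℝ), v ≠ 0 → (∀ x, Δ v x + μ * v x = 0) →
      (∀ x ∈ bd, v x = 0) → lam1 ≤ μ)
    (hα : α < lam1)
    (σ σ₀ : ℝ) (hσ : σ₀ ≠ σ)
    (u : X → ℝ) (hu : ∀ x, Δ u x + α * u x = 0)
    (hub : ∀ x ∈ bd, Dν u x = σ * u x)
    (φ : X → ℝ) (hφ : ∀ x, Δ φ x + α * φ x = 0)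
    (hφb : ∀ x ∈ bd, Dν φ x = σ₀ * φ x) (hφpos : ∀ x, 0 < φ x)
    (Ω Ω' : Set X) (hΩ : IsConnected Ω)
    (hunion : Ω ∪ Ω' = {p | u p ≠ 0})
    (hpos : ∀ p ∈ Ω, 0 < u p) (hneg : ∀ p ∈ Ω', u p < 0) :
    (bd ∩ Ω).Nonempty ∧ (bd ∩ Ω').Nonempty := by
  have horth := boundary_integral_mul_eq_zero_of_steklov Δ Dν intS hGreen hS0 hBeq hBsmul
    hσ hu hub hφ hφb
  have hne : u ≠ 0 := fun h => by
    obtain ⟨p, hp⟩ := hΩ.nonempty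
    simpa [h] using hpos p hp
  have hbd := exists_ne_zero_on_boundary_of_lt_dirichlet Δ hlam1 hα hu hne
  have hφbd : ∀ x ∈ bd, 0 < φ x := fun x _ => hφpos x
  obtain ⟨x, hx, hux⟩ := exists_pos_on_boundary_of_orthogonal hBsmul hBpos hφbd horth hbd
  obtain ⟨y, hy, huy⟩ := exists_neg_on_boundary_of_orthogonal hBsmul hBpos hφbd horth hbd
  have hnodal : ∀ p, u p ≠ 0 → p ∈ Ω ∪ Ω' := fun p hp => hunion ▸ hp
  refine ⟨⟨x, hx, ?_⟩, ⟨y, hy, ?_⟩⟩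
  · exact (hnodal x hux.ne').resolve_right fun h => (hneg x h).not_gt hux
  · exact (hnodal y huy.ne).resolve_left fun h => (hpos y h).not_gt huy

/-- If a Steklov eigenfunction `u` with supercritical frequency `α < λ₁ᴰ` has exactly
two nodal domains `Ω` (where `u > 0`) and `Ω'` (where `u < 0`), and there is a positive
Steklov eigenfunction `φ` with a different Steklov eigenvalue, then both nodal domains
meet the boundary.  The Riemannian surface data are abstracted: `Δ` is the Laplacian,
`Dν` the outward normal derivative along the boundary `bd`, `intS`/`intB` the interior
and boundary integrals satisfying Green's identity and positivity. -/
theorem stmt10 (X : Type*) [TopologicalSpace X]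
    (Δ Dν : (X → ℝ) → (X → ℝ)) (bd : Set X)
    (intS intB : (X → ℝ) → ℝ)
    (hGreen : ∀ u v : X → ℝ,
      intS (fun x => u x * Δ v x - v x * Δ u x) =
        intB (fun x => u x * Dν v x - v x * Dν u x))
    (hS0 : intS 0 = 0)
    (hBeq : ∀ f g : X → ℝ, (∀ x ∈ bd, f x = g x) → intB f = intB g)
    (hBsmul : ∀ (c : ℝ) (f : X → ℝ), intB (fun x => c * f x) = c * intB f)
    (hBpos : ∀ f : X → ℝ, (∀ x ∈ bd, 0 ≤ f x) → (∃ x ∈ bd, f x ≠ 0) → 0 < intB f)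
    (lam1 α : ℝ)
    (hlam1 : ∀ (μ : ℝ) (v : X → ℝ), v ≠ 0 → (∀ x, Δ v x + μ * v x = 0) →
      (∀ x ∈ bd, v x = 0) → lam1 ≤ μ)
    (hα : α < lam1)
    (σ σ₀ : ℝ) (hσ : σ₀ ≠ σ)
    (u : X → ℝ) (hu : ∀ x, Δ u x + α * u x = 0)
    (hub : ∀ x ∈ bd, Dν u x = σ * u x) (hucont : Continuous u)
    (φ : X → ℝ) (hφ : ∀ x, Δ φ x + α * φ x = 0)
    (hφb : ∀ x ∈ bd, Dν φ x = σ₀ * φ x) (hφpos : ∀ x, 0 < φ x)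
    (Ω Ω' : Set X) (hΩ : IsConnected Ω) (hΩ' : IsConnected Ω')
    (hdisj : Disjoint Ω Ω') (hunion : Ω ∪ Ω' = {p | u p ≠ 0})
    (hpos : ∀ p ∈ Ω, 0 < u p) (hneg : ∀ p ∈ Ω', u p < 0) :
    (bd ∩ Ω).Nonempty ∧ (bd ∩ Ω').Nonempty :=
  stmt10_general X Δ Dν bd intS intB hGreen hS0 hBeq hBsmul hBpos lam1 α hlam1 hα σ σ₀ hσ u hu hub φ
    hφ hφb hφpos Ω Ω' hΩ hunion hpos hneg
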